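/- arXiv:1801.08674 — 2 statements merged into one kernel-verified Lean document; each statement's English description precedes it below -/
import Mathlib

section
/- Let m be a positive integer, A : ℝ → Matrix (Fin m) (Fin m) ℝ, and let w, v : ℝ → EuclideanSpace ℝ (Fin m) be differentiable with w'(t) = A(t) ·ᵥ w(t) and v'(t) = −(A(t))ᵀ ·ᵥ v(t) for all t ∈ ℝ. Suppose there exist C > 0 and real numbers μ ≠ λ such that ‖w(t₂)‖ ≤ C e^{μ(t₂−t₁)} ‖w(t₁)‖ for all t₁, t₂ ∈ ℝ (w is a tangent CLV with exponent μ) and ‖v(t₁)‖ ≤ C e^{λ(t₂−t₁)} ‖v(t₂)‖ for all t₁, t₂ ∈ ℝ (v is an adjoint CLV with exponent λ). Then ⟨w(t), v(t)⟩ = 0 for all t ∈ ℝ. (Tangent CLVs and adjoint CLVs with distinct exponents are orthogonal.) -/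
open Matrix Real
open scoped RealInnerProductSpace

/-!
The pairing `⟪w t, v t⟫` of a tangent and an adjoint solution is conserved, since its derivative is
`⟪A w, v⟫ - ⟪w, Aᵀ v⟫ = 0`. Comparing its value at time `t` with the one at time `s` through the two
growth bounds gives `|⟪w t, v t⟫| ≤ C² ‖w t‖ ‖v t‖ e^{(μ - λ)(s - t)}` for every `s`, and since
`μ ≠ λ`, letting `s` run to `±∞` makes the right-hand side vanish.
-/

theorem Matrix.inner_toLp_mulVec_left {m n : Type*} [Fintype m] [Fintype n]
    (B : Matrix m n ℝ) (x : EuclideanSpace ℝ n) (y : EuclideanSpace ℝ m) :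
    ⟪WithLp.toLp 2 (B *ᵥ x), y⟫ = ⟪x, WithLp.toLp 2 (Bᵀ *ᵥ y)⟫ := by
  simp only [EuclideanSpace.inner_eq_star_dotProduct, star_trivial, mulVec_transpose,
    dotProduct_mulVec, dotProduct_comm]

theorem inner_tangent_adjoint_eq {ι : Type*} [Fintype ι] {A : ℝ → Matrix ι ι ℝ}
    {w v : ℝ → EuclideanSpace ℝ ι} (hw : Differentiable ℝ w) (hv : Differentiable ℝ v)
    (hw' : ∀ t : ℝ, deriv w t = (A t) *ᵥ (w t)) (hv' : ∀ t : ℝ, deriv v t = (-(A t)ᵀ) *ᵥ (v t))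
    (s t : ℝ) : ⟪w s, v s⟫ = ⟪w t, v t⟫ := by
  have hderiv : ∀ t, HasDerivAt (fun s => ⟪w s, v s⟫) 0 t := by
    intro t
    have hwt : deriv w t = WithLp.toLp 2 (A t *ᵥ w t) := congrArg (WithLp.toLp 2) (hw' t)
    have hvt : deriv v t = WithLp.toLp 2 (-(A t)ᵀ *ᵥ v t) := congrArg (WithLp.toLp 2) (hv' t)
    have hzero : ⟪w t, deriv v t⟫ + ⟪deriv w t, v t⟫ = 0 := by
      rw [hwt, hvt, inner_toLp_mulVec_left, neg_mulVec, WithLp.toLp_neg, inner_neg_right,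
        neg_add_cancel]
    simpa only [hzero] using (hw t).hasDerivAt.inner ℝ (hv t).hasDerivAt
  exact is_const_of_deriv_eq_zero (fun t => (hderiv t).differentiableAt)
    (fun t => (hderiv t).deriv) s t

theorem abs_inner_le_mul_exp_of_growth {E : Type*} [NormedAddCommGroup E] [InnerProductSpace ℝ E]
    {w v : ℝ → E} {C₁ C₂ μ lam : ℝ}
    (hw : ∀ t₁ t₂ : ℝ, ‖w t₂‖ ≤ C₁ * exp (μ * (t₂ - t₁)) * ‖w t₁‖)
    (hv : ∀ t₁ t₂ : ℝ, ‖v t₁‖ ≤ C₂ * exp (lam * (t₂ - t₁)) * ‖v t₂‖) (s t : ℝ) :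
    |⟪w s, v s⟫| ≤ C₁ * C₂ * ‖w t‖ * ‖v t‖ * exp ((μ - lam) * (s - t)) :=
  calc |⟪w s, v s⟫| ≤ ‖w s‖ * ‖v s‖ := abs_real_inner_le_norm _ _
    _ ≤ (C₁ * exp (μ * (s - t)) * ‖w t‖) * (C₂ * exp (lam * (t - s)) * ‖v t‖) :=
        mul_le_mul (hw t s) (hv s t) (norm_nonneg _) ((norm_nonneg _).trans (hw t s))
    _ = C₁ * C₂ * ‖w t‖ * ‖v t‖ * exp ((μ - lam) * (s - t)) := by
        rw [show (μ - lam) * (s - t) = μ * (s - t) + lam * (t - s) by ring, exp_add]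
        ring

theorem eq_zero_of_abs_le_mul_exp {c K a t₀ : ℝ} (ha : a ≠ 0)
    (h : ∀ s : ℝ, |c| ≤ K * exp (a * (s - t₀))) : c = 0 := by
  have hbound : ∀ u : ℝ, |c| ≤ K * exp u := fun u => by
    simpa [mul_div_cancel₀ u ha] using h (t₀ + u / a)
  have hlim : Filter.Tendsto (fun u => K * exp u) Filter.atBot (nhds 0) := by
    simpa using tendsto_exp_atBot.const_mul K
  exact abs_nonpos_iff.mp (ge_of_tendsto hlim (Filter.Eventually.of_forall hbound))

theorem stmt_4_general (m : ℕ)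
    (A : ℝ → Matrix (Fin m) (Fin m) ℝ)
    (w v : ℝ → EuclideanSpace ℝ (Fin m))
    (hw : Differentiable ℝ w) (hv : Differentiable ℝ v)
    (hw' : ∀ t : ℝ, deriv w t = (A t) *ᵥ (w t))
    (hv' : ∀ t : ℝ, deriv v t = (-(A t)ᵀ) *ᵥ (v t))
    (C : ℝ) (μ lam : ℝ) (hne : μ ≠ lam)
    (hwCLV : ∀ t₁ t₂ : ℝ, ‖w t₂‖ ≤ C * exp (μ * (t₂ - t₁)) * ‖w t₁‖)
    (hvCLV : ∀ t₁ t₂ : ℝ, ‖v t₁‖ ≤ C * exp (lam * (t₂ - t₁)) * ‖v t₂‖) :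
    ∀ t : ℝ, ⟪w t, v t⟫ = 0 := by
  intro t
  refine eq_zero_of_abs_le_mul_exp (K := C * C * ‖w t‖ * ‖v t‖) (t₀ := t)
    (sub_ne_zero.mpr hne) fun s => ?_
  rw [inner_tangent_adjoint_eq hw hv hw' hv' t s]
  exact abs_inner_le_mul_exp_of_growth hwCLV hvCLV s t

/-- Tangent CLVs and adjoint CLVs with distinct exponents are orthogonal. -/
theorem stmt_4 (m : ℕ) (hm : 0 < m)
    (A : ℝ → Matrix (Fin m) (Fin m) ℝ)
    (w v : ℝ → EuclideanSpace ℝ (Fin m))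
    (hw : Differentiable ℝ w) (hv : Differentiable ℝ v)
    (hw' : ∀ t : ℝ, deriv w t = (A t) *ᵥ (w t))
    (hv' : ∀ t : ℝ, deriv v t = (-(A t)ᵀ) *ᵥ (v t))
    (C : ℝ) (hC : 0 < C) (μ lam : ℝ) (hne : μ ≠ lam)
    (hwCLV : ∀ t₁ t₂ : ℝ, ‖w t₂‖ ≤ C * exp (μ * (t₂ - t₁)) * ‖w t₁‖)
    (hvCLV : ∀ t₁ t₂ : ℝ, ‖v t₁‖ ≤ C * exp (lam * (t₂ - t₁)) * ‖v t₂‖) :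
    ∀ t : ℝ, ⟪w t, v t⟫ = 0 :=
  stmt_4_general m A w v hw hv hw' hv' C μ lam hne hwCLV hvCLV
end

section
/- Let m be a positive integer, (A_l)_{l ∈ ℤ} a family of matrices in Matrix (Fin m) (Fin m) ℝ, and (w_l)_{l ∈ ℤ}, (v_l)_{l ∈ ℤ} sequences in EuclideanSpace ℝ (Fin m) satisfying w_{l+1} = A_l ·ᵥ w_l and v_l = (A_l)ᵀ ·ᵥ v_{l+1} for all l ∈ ℤ. Suppose there exist C > 0 and real numbers μ ≠ λ such that ‖w_{l₂}‖ ≤ C e^{μ(l₂−l₁)} ‖w_{l₁}‖ and ‖v_{l₁}‖ ≤ C e^{λ(l₂−l₁)} ‖v_{l₂}‖ for all l₁, l₂ ∈ ℤ. Then ⟨w_l, v_l⟩ = 0 for all l ∈ ℤ. (For hyperbolic diffeomorphisms, tangent CLVs and adjoint CLVs with distinct exponents are orthogonal.) -/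
open Matrix Real Filter
open scoped RealInnerProductSpace

/-!
The pairing `⟪w l, v l⟫` of a tangent solution with an adjoint solution is independent of `l`,
since `⟪A x, y⟫ = ⟪x, Aᵀ y⟫`. The CLV bounds give `|⟪w l, v l⟫| ≤ C² ‖w 0‖ ‖v 0‖ e^{(μ - λ) l}`
for every `l`, and as `μ ≠ λ` the right-hand side tends to `0` as `l → +∞` or as `l → -∞`.
-/

theorem EuclideanSpace.inner_eq_of_mulVec_of_transpose_mulVec {ι κ : Type*} [Fintype ι]
    [Fintype κ] (A : Matrix ι κ ℝ) {x y' : EuclideanSpace ℝ κ} {x' y : EuclideanSpace ℝ ι}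
    (hx : x'.ofLp = A *ᵥ x.ofLp) (hy : y'.ofLp = Aᵀ *ᵥ y.ofLp) :
    ⟪x', y⟫ = ⟪x, y'⟫ := by
  simp only [EuclideanSpace.inner_eq_star_dotProduct, star_trivial, hx, hy, dotProduct_mulVec,
    mulVec_transpose]

theorem Int.apply_eq_apply_zero_of_apply_add_one {α : Type*} {f : ℤ → α}
    (hf : ∀ n, f (n + 1) = f n) (n : ℤ) : f n = f 0 := by
  simpa using Function.Periodic.int_mul_eq (c := 1) hf n

theorem Real.eq_zero_of_abs_le_mul_exp_int {c K δ : ℝ} (hδ : δ ≠ 0)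
    (h : ∀ n : ℤ, |c| ≤ K * exp (δ * n)) : c = 0 := by
  obtain ⟨l, _, hl⟩ : ∃ l : Filter ℤ, l.NeBot ∧ Tendsto (fun n : ℤ => δ * n) l atBot := by
    rcases hδ.lt_or_gt with hneg | hpos
    · exact ⟨atTop, inferInstance, tendsto_intCast_atTop_atTop.const_mul_atTop_of_neg hneg⟩
    · exact ⟨atBot, inferInstance,
        (tendsto_intCast_atBot_iff.mpr tendsto_id).const_mul_atBot hpos⟩
  have hlim : Tendsto (fun n : ℤ => K * exp (δ * n)) l (nhds 0) := by
    simpa using (tendsto_exp_atBot.comp hl).const_mul K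
  exact abs_nonpos_iff.mp (ge_of_tendsto' hlim h)

theorem stmt_17_general (m : ℕ)
    (A : ℤ → Matrix (Fin m) (Fin m) ℝ)
    (w v : ℤ → EuclideanSpace ℝ (Fin m))
    (hw : ∀ l : ℤ, w (l + 1) = (A l) *ᵥ (w l))
    (hv : ∀ l : ℤ, v l = (A l)ᵀ *ᵥ (v (l + 1)))
    (C : ℝ) (μ lam : ℝ) (hne : μ ≠ lam)
    (hwCLV : ∀ l₁ l₂ : ℤ, ‖w l₂‖ ≤ C * exp (μ * ((l₂ : ℝ) - (l₁ : ℝ))) * ‖w l₁‖)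
    (hvCLV : ∀ l₁ l₂ : ℤ, ‖v l₁‖ ≤ C * exp (lam * ((l₂ : ℝ) - (l₁ : ℝ))) * ‖v l₂‖) :
    ∀ l : ℤ, ⟪w l, v l⟫ = 0 := by
  have hconst : ∀ l, ⟪w l, v l⟫ = ⟪w 0, v 0⟫ := Int.apply_eq_apply_zero_of_apply_add_one fun l =>
    EuclideanSpace.inner_eq_of_mulVec_of_transpose_mulVec (A l) (hw l) (hv l)
  intro l
  rw [hconst l]
  refine eq_zero_of_abs_le_mul_exp_int (K := C * C * (‖w 0‖ * ‖v 0‖)) (sub_ne_zero.mpr hne)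
    fun n => ?_
  have hwn := hwCLV 0 n
  have hvn := hvCLV n 0
  simp only [Int.cast_zero, sub_zero, zero_sub, mul_neg] at hwn hvn
  calc |⟪w 0, v 0⟫| = |⟪w n, v n⟫| := by rw [hconst n]
    _ ≤ ‖w n‖ * ‖v n‖ := abs_real_inner_le_norm _ _
    _ ≤ (C * exp (μ * n) * ‖w 0‖) * (C * exp (-(lam * n)) * ‖v 0‖) :=
      mul_le_mul hwn hvn (norm_nonneg _) ((norm_nonneg _).trans hwn)
    _ = C * C * (‖w 0‖ * ‖v 0‖) * exp ((μ - lam) * n) := by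
      rw [sub_mul, sub_eq_add_neg, exp_add]
      ring

/-- For hyperbolic diffeomorphisms, tangent CLVs and adjoint CLVs with distinct
exponents are orthogonal. -/
theorem stmt_17 (m : ℕ) (hm : 0 < m)
    (A : ℤ → Matrix (Fin m) (Fin m) ℝ)
    (w v : ℤ → EuclideanSpace ℝ (Fin m))
    (hw : ∀ l : ℤ, w (l + 1) = (A l) *ᵥ (w l))
    (hv : ∀ l : ℤ, v l = (A l)ᵀ *ᵥ (v (l + 1)))
    (C : ℝ) (hC : 0 < C) (μ lam : ℝ) (hne : μ ≠ lam)
    (hwCLV : ∀ l₁ l₂ : ℤ, ‖w l₂‖ ≤ C * exp (μ * ((l₂ : ℝ) - (l₁ : ℝ))) * ‖w l₁‖)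
    (hvCLV : ∀ l₁ l₂ : ℤ, ‖v l₁‖ ≤ C * exp (lam * ((l₂ : ℝ) - (l₁ : ℝ))) * ‖v l₂‖) :
    ∀ l : ℤ, ⟪w l, v l⟫ = 0 :=
  stmt_17_general m A w v hw hv C μ lam hne hwCLV hvCLV
end
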